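/- If the trajectory set S satisfies Leinert's condition at every node (i.e., σ̄(0) ≥ 0 holds for every shifted conditional space S^{(S,j)}), then S satisfies König's condition at every node (in particular (LOP) and (K) hold for S itself). -/

import Mathlib

open Filter
open scoped ENNReal

noncomputable section

/-- A simple portfolio: an initial endowment `V`, a maturity `n`, and
nonanticipating position functions `H i`. -/
structure SimplePortfolio where
  V : ℝ
  n : ℕ
  H : ℕ → (ℕ → ℝ) → ℝ
  nonanticipating : ∀ i, ∀ S S' : ℕ → ℝ, (∀ k, k ≤ i → S k = S' k) → H i S = H i S'

namespace SimplePortfolio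

/-- Wealth process at time `j`. -/
def wealthAt (P : SimplePortfolio) (j : ℕ) (S : ℕ → ℝ) : ℝ :=
  P.V + ∑ i ∈ Finset.range (min j P.n), P.H i S * (S (i + 1) - S i)

/-- Terminal wealth `Π_∞`. -/
def wealth (P : SimplePortfolio) (S : ℕ → ℝ) : ℝ :=
  P.V + ∑ i ∈ Finset.range P.n, P.H i S * (S (i + 1) - S i)

/-- A positive simple portfolio relative to the trajectory set `𝒮`. -/
def Positive (𝒮 : Set (ℕ → ℝ)) (P : SimplePortfolio) : Prop :=
  0 ≤ P.V ∧ ∀ S ∈ 𝒮, 0 ≤ P.wealth S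

end SimplePortfolio

/-- A generalized portfolio: a sequence of simple portfolios, positive for `m ≥ 1`. -/
def IsGenPortfolio (𝒮 : Set (ℕ → ℝ)) (P : ℕ → SimplePortfolio) : Prop :=
  ∀ m, 1 ≤ m → (P m).Positive 𝒮

/-- Total terminal wealth of a generalized portfolio, valued in `(-∞, +∞]`. -/
def totalWealth (P : ℕ → SimplePortfolio) (S : ℕ → ℝ) : EReal :=
  ((P 0).wealth S : EReal) + ((∑' m, ENNReal.ofReal ((P (m + 1)).wealth S) : ℝ≥0∞) : EReal)

/-- Total initial endowment of a generalized portfolio, valued in `(-∞, +∞]`. -/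
def totalEndow (P : ℕ → SimplePortfolio) : EReal :=
  ((P 0).V : EReal) + ((∑' m, ENNReal.ofReal ((P (m + 1)).V) : ℝ≥0∞) : EReal)

/-- The superhedging operator `σ̄` using generalized portfolios. -/
def sigmaBar (𝒮 : Set (ℕ → ℝ)) (f : (ℕ → ℝ) → EReal) : EReal :=
  sInf {c : EReal | ∃ P : ℕ → SimplePortfolio, IsGenPortfolio 𝒮 P ∧
    (∀ S ∈ 𝒮, f S ≤ totalWealth P S) ∧ c = totalEndow P}

/-- The superhedging operator `Ī` using positive generalized portfolios. -/
def IBar (𝒮 : Set (ℕ → ℝ)) (f : (ℕ → ℝ) → EReal) : EReal :=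
  sInf {c : EReal | ∃ P : ℕ → SimplePortfolio, (∀ m, (P m).Positive 𝒮) ∧
    (∀ S ∈ 𝒮, f S ≤ ((∑' m, ENNReal.ofReal ((P m).wealth S) : ℝ≥0∞) : EReal)) ∧
    c = ((∑' m, ENNReal.ofReal ((P m).V) : ℝ≥0∞) : EReal)}

/-- The trajectory-wise Law of One Price (LOP). -/
def LOP (𝒮 : Set (ℕ → ℝ)) : Prop :=
  ∀ P Q : SimplePortfolio, (∀ S ∈ 𝒮, P.wealth S = Q.wealth S) → P.V = Q.V

/-- Positivity of the elementary hedging functional `I`: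
any simple portfolio whose terminal wealth is nonnegative on `𝒮` (i.e. an element of `E⁺`)
has nonnegative initial endowment (price). -/
def IPos (𝒮 : Set (ℕ → ℝ)) : Prop :=
  ∀ P : SimplePortfolio, (∀ S ∈ 𝒮, 0 ≤ P.wealth S) → 0 ≤ P.V

/-- Leinert's condition (L): `σ̄(0) ≥ 0`. -/
def LeinertCond (𝒮 : Set (ℕ → ℝ)) : Prop := 0 ≤ sigmaBar 𝒮 (fun _ => 0)

/-- König's condition (K): `I(f) + Ī(f⁻) ≤ Ī(f⁺)` for all `f ∈ E`. -/
def KoenigCond (𝒮 : Set (ℕ → ℝ)) : Prop :=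
  ∀ P : SimplePortfolio,
    (P.V : EReal) + IBar 𝒮 (fun S => ((max (-(P.wealth S)) 0 : ℝ) : EReal))
      ≤ IBar 𝒮 (fun S => ((max (P.wealth S) 0 : ℝ) : EReal))

/-- The seminorm `‖f‖ = Ī(|f|)`. -/
def pnorm (𝒮 : Set (ℕ → ℝ)) (f : (ℕ → ℝ) → ℝ) : EReal :=
  IBar 𝒮 (fun S => ((|f S| : ℝ) : EReal))

/-- Null sets with respect to the seminorm `‖·‖`. -/
def NullSet (𝒮 : Set (ℕ → ℝ)) (A : Set (ℕ → ℝ)) : Prop :=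
  IBar 𝒮 (A.indicator fun _ => (1 : EReal)) = 0

/-- The shifted conditional space `𝒮^{(S,j)}`. -/
def shiftedSpace (𝒮 : Set (ℕ → ℝ)) (S : ℕ → ℝ) (j : ℕ) : Set (ℕ → ℝ) :=
  {T | ∃ S' ∈ 𝒮, (∀ i, i ≤ j → S' i = S i) ∧ ∀ i, T i = S' (j + i)}

/-- Leinert's condition at every node (nL). -/
def NodewiseL (𝒮 : Set (ℕ → ℝ)) : Prop :=
  ∀ S ∈ 𝒮, ∀ j : ℕ, LeinertCond (shiftedSpace 𝒮 S j)

/-- König's condition (together with (LOP)) at every node (nK). -/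
def NodewiseK (𝒮 : Set (ℕ → ℝ)) : Prop :=
  ∀ S ∈ 𝒮, ∀ j : ℕ, LOP (shiftedSpace 𝒮 S j) ∧ KoenigCond (shiftedSpace 𝒮 S j)

/-- `S'` agrees with `S` up to time `j`. -/
def agreesUpTo (S S' : ℕ → ℝ) (j : ℕ) : Prop := ∀ i, i ≤ j → S' i = S i

/-- The node `𝒮_{(S,j)}` is flat. -/
def FlatNode (𝒮 : Set (ℕ → ℝ)) (S : ℕ → ℝ) (j : ℕ) : Prop :=
  ∀ S' ∈ 𝒮, agreesUpTo S S' j → S' (j + 1) = S j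

/-- The node `𝒮_{(S,j)}` is an arbitrage node. -/
def ArbNode (𝒮 : Set (ℕ → ℝ)) (S : ℕ → ℝ) (j : ℕ) : Prop :=
  ∃ ε : ℝ, (ε = 1 ∨ ε = -1) ∧
    (∀ S' ∈ 𝒮, agreesUpTo S S' j → 0 ≤ ε * (S' (j + 1) - S j)) ∧
    ∃ S' ∈ 𝒮, agreesUpTo S S' j ∧ 0 < ε * (S' (j + 1) - S j)

/-- Arbitrage node of type I. -/
def TypeINode (𝒮 : Set (ℕ → ℝ)) (S : ℕ → ℝ) (j : ℕ) : Prop :=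
  ArbNode 𝒮 S j ∧ ∃ S' ∈ 𝒮, agreesUpTo S S' j ∧ S' (j + 1) = S j

/-- Arbitrage node of type II. -/
def TypeIINode (𝒮 : Set (ℕ → ℝ)) (S : ℕ → ℝ) (j : ℕ) : Prop :=
  ArbNode 𝒮 S j ∧ ¬ ∃ S' ∈ 𝒮, agreesUpTo S S' j ∧ S' (j + 1) = S j

/-- Up-down node: neither flat nor an arbitrage node. -/
def UpDownNode (𝒮 : Set (ℕ → ℝ)) (S : ℕ → ℝ) (j : ℕ) : Prop :=
  ¬ FlatNode 𝒮 S j ∧ ¬ ArbNode 𝒮 S j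

/-- The set `N` of trajectories moving at a type I arbitrage node. -/
def NSet (𝒮 : Set (ℕ → ℝ)) : Set (ℕ → ℝ) :=
  {S | S ∈ 𝒮 ∧ ∃ j : ℕ, TypeINode 𝒮 S j ∧ S (j + 1) ≠ S j}

/-- The set `N_n` of trajectories moving at a type I arbitrage node before time `n`. -/
def NSetUpTo (𝒮 : Set (ℕ → ℝ)) (n : ℕ) : Set (ℕ → ℝ) :=
  {S | S ∈ 𝒮 ∧ ∃ j < n, TypeINode 𝒮 S j ∧ S (j + 1) ≠ S j}

/-- Membership in `L¹_(L)`: `f` has finite norm and is a `‖·‖`-limit of elements of `E'`. -/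
def MemL1L (𝒮 : Set (ℕ → ℝ)) (f : (ℕ → ℝ) → ℝ) : Prop :=
  pnorm 𝒮 f < ⊤ ∧
  ∃ P : ℕ → SimplePortfolio, (∀ m, pnorm 𝒮 ((P m).wealth) < ⊤) ∧
    Tendsto (fun m => pnorm 𝒮 (fun S => f S - (P m).wealth S)) atTop (nhds 0)

/-- Membership in `L¹_(K)`: the outer and inner integrals agree and are finite. -/
def MemL1K (𝒮 : Set (ℕ → ℝ)) (f : (ℕ → ℝ) → ℝ) : Prop :=
  ∃ c : ℝ, sigmaBar 𝒮 (fun S => ((f S : ℝ) : EReal)) = (c : EReal) ∧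
    sigmaBar 𝒮 (fun S => ((-f S : ℝ) : EReal)) = ((-c : ℝ) : EReal)

/-- `f` has finite maturity: it depends only on an initial segment of the trajectory. -/
def FiniteMaturity (𝒮 : Set (ℕ → ℝ)) (f : (ℕ → ℝ) → ℝ) : Prop :=
  ∃ n : ℕ, ∀ S ∈ 𝒮, ∀ S' ∈ 𝒮, (∀ i, i ≤ n → S i = S' i) → f S = f S'

/-! Leinert's condition at a node `(S, j)`, applied to the generalized portfolio that is short a
simple portfolio `g` and long the continuations of a positive family `h` with `g ≤ ∑ h` on `𝒮`,
gives `g_j(S) ≤ ∑ h_j(S)`: superhedging inequalities propagate from maturity to every node. For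
`h = 0` this is positivity of prices, hence (LOP).

For (K), let `h` be a positive generalized hedge of `f⁺`, where `f = Π(P)`. As long as the
positions of the `h m` are summable along a trajectory, the simple portfolio `∑ h - P` replicates
`∑ h_j - P_j ≥ 0`, and at maturity it dominates `f⁻`; its price is `∑ h_0 - P.V`. At a node where
the positions are not summable, all moves go to one side, since nonnegative values `h_{j+1}` after
moves of both signs would bound the positions by a multiple of the summable `h_j`. The hedge stops
trading there, and countably many free bets on the direction of that move give infinite wealth on
every trajectory that moves there. Hence `I(f) + Ī(f⁻) ≤ Ī(f⁺)`. Finally, (nL) passes to shifted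
spaces, since a node of a shifted space is a node of `𝒮`. -/

namespace SimplePortfolio

def pos (P : SimplePortfolio) (j : ℕ) (S : ℕ → ℝ) : ℝ :=
  if j < P.n then P.H j S else 0

lemma pos_congr (P : SimplePortfolio) {j : ℕ} {S S' : ℕ → ℝ} (h : ∀ k, k ≤ j → S k = S' k) :
    P.pos j S = P.pos j S' := by
  unfold pos
  split_ifs
  · exact P.nonanticipating j S S' h
  · rfl

lemma pos_of_le (P : SimplePortfolio) {j : ℕ} (h : P.n ≤ j) (S : ℕ → ℝ) : P.pos j S = 0 :=
  if_neg (not_lt.2 h)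

lemma wealthAt_eq_sum (P : SimplePortfolio) (j : ℕ) (S : ℕ → ℝ) :
    P.wealthAt j S = P.V + ∑ i ∈ Finset.range j, P.pos i S * (S (i + 1) - S i) := by
  rw [wealthAt]
  congr 1
  rw [← Finset.sum_subset (Finset.range_subset_range.2 (min_le_left j P.n))]
  · refine Finset.sum_congr rfl fun i hi => ?_
    rw [pos, if_pos (by rw [Finset.mem_range] at hi; omega)]
  · intro i hij hi
    rw [Finset.mem_range] at hij hi
    rw [P.pos_of_le (by omega), zero_mul]

@[simp] lemma wealthAt_zero (P : SimplePortfolio) (S : ℕ → ℝ) : P.wealthAt 0 S = P.V := by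
  simp [wealthAt_eq_sum]

lemma wealthAt_succ (P : SimplePortfolio) (j : ℕ) (S : ℕ → ℝ) :
    P.wealthAt (j + 1) S = P.wealthAt j S + P.pos j S * (S (j + 1) - S j) := by
  rw [wealthAt_eq_sum, wealthAt_eq_sum, Finset.sum_range_succ, add_assoc]

lemma wealthAt_of_le (P : SimplePortfolio) {j : ℕ} (h : P.n ≤ j) (S : ℕ → ℝ) :
    P.wealthAt j S = P.wealth S := by
  rw [wealthAt, wealth, min_eq_right h]

lemma wealthAt_congr (P : SimplePortfolio) {j : ℕ} {S S' : ℕ → ℝ}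
    (h : ∀ k, k ≤ j → S k = S' k) : P.wealthAt j S = P.wealthAt j S' := by
  simp only [wealthAt_eq_sum]
  refine congrArg _ (Finset.sum_congr rfl fun i hi => ?_)
  rw [Finset.mem_range] at hi
  rw [P.pos_congr fun k hk => h k (by omega), h i (by omega), h (i + 1) (by omega)]

instance : Zero SimplePortfolio := ⟨⟨0, 0, fun _ _ => 0, fun _ _ _ _ => rfl⟩⟩

instance : Sub SimplePortfolio :=
  ⟨fun P Q => ⟨P.V - Q.V, max P.n Q.n, fun i S => P.pos i S - Q.pos i S,
    fun i S S' h => by rw [P.pos_congr h, Q.pos_congr h]⟩⟩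

@[simp] lemma V_zero : (0 : SimplePortfolio).V = 0 := rfl

@[simp] lemma V_sub (P Q : SimplePortfolio) : (P - Q).V = P.V - Q.V := rfl

@[simp] lemma wealthAt_zero_port (j : ℕ) (S : ℕ → ℝ) : (0 : SimplePortfolio).wealthAt j S = 0 := by
  simp only [wealthAt, V_zero, zero_add]
  exact Finset.sum_eq_zero fun i _ => zero_mul _

@[simp] lemma wealth_zero_port (S : ℕ → ℝ) : (0 : SimplePortfolio).wealth S = 0 := by
  rw [← wealthAt_of_le _ le_rfl, wealthAt_zero_port]

lemma pos_sub (P Q : SimplePortfolio) (j : ℕ) (S : ℕ → ℝ) :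
    (P - Q).pos j S = P.pos j S - Q.pos j S := by
  by_cases h : j < max P.n Q.n
  · exact if_pos h
  · rw [pos_of_le _ (not_lt.1 h), P.pos_of_le (by omega), Q.pos_of_le (by omega), sub_zero]

lemma wealthAt_sub (P Q : SimplePortfolio) (j : ℕ) (S : ℕ → ℝ) :
    (P - Q).wealthAt j S = P.wealthAt j S - Q.wealthAt j S := by
  simp only [wealthAt_eq_sum, pos_sub, V_sub, sub_mul, Finset.sum_sub_distrib]
  ring

lemma wealth_sub (P Q : SimplePortfolio) (S : ℕ → ℝ) :
    (P - Q).wealth S = P.wealth S - Q.wealth S := by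
  have hP : P.n ≤ (P - Q).n := le_max_left P.n Q.n
  have hQ : Q.n ≤ (P - Q).n := le_max_right P.n Q.n
  rw [← wealthAt_of_le _ le_rfl, wealthAt_sub, P.wealthAt_of_le hP, Q.wealthAt_of_le hQ]

end SimplePortfolio

def splice (S : ℕ → ℝ) (j : ℕ) (T : ℕ → ℝ) : ℕ → ℝ :=
  fun k => if k ≤ j then S k else T (k - j)

lemma splice_eq {S S' T : ℕ → ℝ} {j : ℕ} (hS' : agreesUpTo S S' j)
    (hT : ∀ i, T i = S' (j + i)) : splice S j T = S' := by
  funext k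
  unfold splice
  split_ifs with hk
  · exact (hS' k hk).symm
  · rw [hT, Nat.add_sub_cancel' (by omega)]

namespace SimplePortfolio

/-- The portfolio `P` continued from the node `(S, j)`, as a portfolio on the shifted space. -/
def cond (P : SimplePortfolio) (S : ℕ → ℝ) (j : ℕ) : SimplePortfolio where
  V := P.wealthAt j S
  n := P.n
  H i T := P.pos (j + i) (splice S j T)
  nonanticipating i T T' h := P.pos_congr fun k hk => by
    unfold splice
    split_ifs with hkj
    · rfl
    · exact h _ (by omega)

variable {P : SimplePortfolio} {S S' T : ℕ → ℝ} {j : ℕ}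

lemma wealthAt_cond (hS' : agreesUpTo S S' j) (hT : ∀ i, T i = S' (j + i)) (k : ℕ) :
    (P.cond S j).wealthAt k T = P.wealthAt (j + k) S' := by
  induction k with
  | zero => exact (wealthAt_zero _ _).trans (P.wealthAt_congr fun i hi => (hS' i hi).symm)
  | succ k ih =>
    have hpos : (P.cond S j).pos k T = P.pos (j + k) S' := by
      by_cases hk : k < P.n
      · exact (if_pos hk).trans (congrArg (P.pos (j + k)) (splice_eq hS' hT))
      · rw [(P.cond S j).pos_of_le (not_lt.1 hk), P.pos_of_le (by omega)]
    rw [wealthAt_succ, ih, hpos, hT, hT, ← add_assoc, ← wealthAt_succ]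

lemma wealth_cond (hS' : agreesUpTo S S' j) (hT : ∀ i, T i = S' (j + i)) :
    (P.cond S j).wealth T = P.wealth S' := by
  rw [← wealthAt_of_le _ le_rfl, wealthAt_cond hS' hT, P.wealthAt_of_le (by simp [cond])]

end SimplePortfolio

lemma shiftedSpace_nonempty {𝒯 : Set (ℕ → ℝ)} {S : ℕ → ℝ} (hS : S ∈ 𝒯) (j : ℕ) :
    (shiftedSpace 𝒯 S j).Nonempty :=
  ⟨fun i => S (j + i), S, hS, fun _ _ => rfl, fun _ => rfl⟩

lemma shiftedSpace_shiftedSpace {𝒮 : Set (ℕ → ℝ)} {S₀ S E : ℕ → ℝ} {j₀ : ℕ}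
    (hE₀ : agreesUpTo S₀ E j₀) (hS : ∀ i, S i = E (j₀ + i)) (j : ℕ) :
    shiftedSpace (shiftedSpace 𝒮 S₀ j₀) S j = shiftedSpace 𝒮 E (j₀ + j) := by
  ext T
  constructor
  · rintro ⟨S', ⟨E', hE', hE'₀, hS'⟩, hS'S, hT⟩
    refine ⟨E', hE', fun i hi => ?_, fun i => by rw [hT, hS', add_assoc]⟩
    rcases le_or_gt i j₀ with h | h
    · rw [hE'₀ i h, hE₀ i h]
    · obtain ⟨k, rfl⟩ : ∃ k, i = j₀ + k := ⟨i - j₀, by omega⟩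
      rw [← hS', hS'S k (by omega), hS k]
  · rintro ⟨E', hE', hE'E, hT⟩
    refine ⟨fun i => E' (j₀ + i), ⟨E', hE', fun i hi => ?_, fun _ => rfl⟩, fun i hi => ?_,
      fun i => by rw [hT, add_assoc]⟩
    · rw [hE'E i (by omega), hE₀ i hi]
    · show E' (j₀ + i) = S i
      rw [hE'E (j₀ + i) (by omega), hS i]

def portSeq (P₀ : SimplePortfolio) (h : ℕ → SimplePortfolio) : ℕ → SimplePortfolio
  | 0 => P₀
  | m + 1 => h m

lemma totalWealth_portSeq (P₀ : SimplePortfolio) (h : ℕ → SimplePortfolio) (S : ℕ → ℝ) :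
    totalWealth (portSeq P₀ h) S
      = (P₀.wealth S : EReal) + ((∑' m, ENNReal.ofReal ((h m).wealth S) : ℝ≥0∞) : EReal) :=
  rfl

lemma totalEndow_portSeq (P₀ : SimplePortfolio) (h : ℕ → SimplePortfolio) :
    totalEndow (portSeq P₀ h) = (P₀.V : EReal) + ((∑' m, ENNReal.ofReal (h m).V : ℝ≥0∞) : EReal) :=
  rfl

lemma EReal.nonneg_neg_add_coe_ennreal_iff {x : ℝ} {b : ℝ≥0∞} :
    0 ≤ ((-x : ℝ) : EReal) + b ↔ ENNReal.ofReal x ≤ b := by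
  rcases eq_or_ne b ⊤ with rfl | hb
  · simp
  · rw [← EReal.coe_ennreal_toReal hb, ← EReal.coe_add, EReal.coe_nonneg,
      ENNReal.ofReal_le_iff_le_toReal hb]
    constructor <;> intro <;> linarith

lemma EReal.coe_le_coe_ennreal_iff {x : ℝ} {b : ℝ≥0∞} :
    (x : EReal) ≤ b ↔ ENNReal.ofReal x ≤ b := by
  rcases eq_or_ne b ⊤ with rfl | hb
  · simp
  · rw [← EReal.coe_ennreal_toReal hb, EReal.coe_le_coe_iff, ENNReal.ofReal_le_iff_le_toReal hb]

lemma LeinertCond.totalEndow_nonneg {𝒯 : Set (ℕ → ℝ)} (hL : LeinertCond 𝒯)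
    {Q : ℕ → SimplePortfolio} (hQ : IsGenPortfolio 𝒯 Q) (hw : ∀ S ∈ 𝒯, 0 ≤ totalWealth Q S) :
    0 ≤ totalEndow Q :=
  hL.trans (sInf_le ⟨Q, hQ, hw, rfl⟩)

namespace NodewiseL

variable {𝒯 : Set (ℕ → ℝ)} {S : ℕ → ℝ} {g : SimplePortfolio} {h : ℕ → SimplePortfolio}

open SimplePortfolio

lemma ofReal_wealthAt_le_of_wealthAt_nonneg (hL : NodewiseL 𝒯)
    (hh : ∀ m, ∀ T ∈ 𝒯, 0 ≤ (h m).wealth T)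
    (hdom : ∀ T ∈ 𝒯, ENNReal.ofReal (g.wealth T) ≤ ∑' m, ENNReal.ofReal ((h m).wealth T))
    (hS : S ∈ 𝒯) {j : ℕ} (hhS : ∀ m, 0 ≤ (h m).wealthAt j S) :
    ENNReal.ofReal (g.wealthAt j S) ≤ ∑' m, ENNReal.ofReal ((h m).wealthAt j S) := by
  have hgen : IsGenPortfolio (shiftedSpace 𝒯 S j)
      (portSeq ((0 - g).cond S j) fun m => (h m).cond S j) := by
    rintro (_ | m) hm
    · omega
    refine ⟨hhS m, ?_⟩
    rintro T ⟨S', hS', hSS', hT⟩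
    exact (wealth_cond hSS' hT).symm ▸ hh m S' hS'
  have hendow := (hL S hS j).totalEndow_nonneg hgen <| by
    rintro T ⟨S', hS', hSS', hT⟩
    simp only [totalWealth_portSeq, wealth_cond hSS' hT, wealth_sub, wealth_zero_port, zero_sub]
    exact EReal.nonneg_neg_add_coe_ennreal_iff.2 (hdom S' hS')
  simp only [totalEndow_portSeq, SimplePortfolio.cond, wealthAt_sub, wealthAt_zero_port,
    zero_sub] at hendow
  exact EReal.nonneg_neg_add_coe_ennreal_iff.1 hendow

lemma wealthAt_nonneg (hL : NodewiseL 𝒯) {P : SimplePortfolio} (hP : ∀ T ∈ 𝒯, 0 ≤ P.wealth T)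
    (hS : S ∈ 𝒯) (j : ℕ) : 0 ≤ P.wealthAt j S := by
  have := hL.ofReal_wealthAt_le_of_wealthAt_nonneg (g := 0 - P) (h := fun _ => 0) (j := j)
    (fun _ _ _ => by simp) (fun T hT => by simp [wealth_sub, hP T hT]) hS (fun _ => by simp)
  simpa [wealthAt_sub] using this

lemma ofReal_wealthAt_le (hL : NodewiseL 𝒯) (hh : ∀ m, ∀ T ∈ 𝒯, 0 ≤ (h m).wealth T)
    (hdom : ∀ T ∈ 𝒯, ENNReal.ofReal (g.wealth T) ≤ ∑' m, ENNReal.ofReal ((h m).wealth T))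
    (hS : S ∈ 𝒯) (j : ℕ) :
    ENNReal.ofReal (g.wealthAt j S) ≤ ∑' m, ENNReal.ofReal ((h m).wealthAt j S) :=
  hL.ofReal_wealthAt_le_of_wealthAt_nonneg hh hdom hS fun m => hL.wealthAt_nonneg (hh m) hS j

lemma wealthAt_le_tsum (hL : NodewiseL 𝒯) (hh : ∀ m, ∀ T ∈ 𝒯, 0 ≤ (h m).wealth T)
    (hdom : ∀ T ∈ 𝒯, ENNReal.ofReal (g.wealth T) ≤ ∑' m, ENNReal.ofReal ((h m).wealth T))
    (hS : S ∈ 𝒯) {j : ℕ} (hsum : Summable fun m => (h m).wealthAt j S) :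
    g.wealthAt j S ≤ ∑' m, (h m).wealthAt j S := by
  have hnn m : 0 ≤ (h m).wealthAt j S := hL.wealthAt_nonneg (hh m) hS j
  have := hL.ofReal_wealthAt_le hh hdom hS j
  rwa [← ENNReal.ofReal_tsum_of_nonneg hnn hsum,
    ENNReal.ofReal_le_ofReal_iff (tsum_nonneg hnn)] at this

lemma iPos (hL : NodewiseL 𝒯) (hne : 𝒯.Nonempty) : IPos 𝒯 := fun P hP => by
  obtain ⟨S, hS⟩ := hne
  simpa using hL.wealthAt_nonneg hP hS 0

end NodewiseL

lemma IPos.lop {𝒯 : Set (ℕ → ℝ)} (h : IPos 𝒯) : LOP 𝒯 := by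
  intro P Q hPQ
  have h₁ := h (P - Q) fun S hS => by simp [SimplePortfolio.wealth_sub, hPQ S hS]
  have h₂ := h (Q - P) fun S hS => by simp [SimplePortfolio.wealth_sub, hPQ S hS]
  simp only [SimplePortfolio.V_sub, sub_nonneg] at h₁ h₂
  exact le_antisymm h₂ h₁

lemma NodewiseL.shiftedSpace {𝒮 : Set (ℕ → ℝ)} (hL : NodewiseL 𝒮) (S : ℕ → ℝ) (j : ℕ) :
    NodewiseL (shiftedSpace 𝒮 S j) := by
  rintro _ ⟨E, hE, hE₀, hS'⟩ j'
  rw [shiftedSpace_shiftedSpace hE₀ hS' j']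
  exact hL E hE (j + j')

open SimplePortfolio

/- At a node where the positions of the `g m` are not summable the hedge `hedgePort` below stops
trading; a trajectory is alive at `j` if it has not moved at such a node before time `j`. -/
def Alive (g : ℕ → SimplePortfolio) (j : ℕ) (S : ℕ → ℝ) : Prop :=
  ∀ i < j, Summable (fun m => (g m).pos i S) ∨ S (i + 1) = S i

section Alive

variable {g : ℕ → SimplePortfolio} {j : ℕ} {S S' : ℕ → ℝ}

lemma alive_zero : Alive g 0 S := fun _ hi => absurd hi (Nat.not_lt_zero _)

lemma alive_succ_iff :
    Alive g (j + 1) S ↔ Alive g j S ∧ (Summable (fun m => (g m).pos j S) ∨ S (j + 1) = S j) := by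
  simp only [Alive, Nat.lt_succ_iff_lt_or_eq, or_imp, forall_and, forall_eq]

lemma summable_pos_congr (h : ∀ k, k ≤ j → S k = S' k) :
    Summable (fun m => (g m).pos j S) ↔ Summable (fun m => (g m).pos j S') := by
  simp only [(g _).pos_congr h]

lemma alive_congr (h : ∀ k, k ≤ j → S k = S' k) : Alive g j S ↔ Alive g j S' :=
  forall₂_congr fun i hi => by
    rw [summable_pos_congr fun k hk => h k (by omega), h i (by omega), h (i + 1) hi]

lemma exists_stop_of_not_alive (h : ¬ Alive g j S) :
    ∃ i < j, Alive g i S ∧ ¬ Summable (fun m => (g m).pos i S) ∧ S (i + 1) ≠ S i := by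
  induction j with
  | zero => exact absurd alive_zero h
  | succ j ih =>
    by_cases ha : Alive g j S
    · rw [alive_succ_iff, not_and, not_or] at h
      exact ⟨j, j.lt_succ_self, ha, h ha⟩
    · obtain ⟨i, hi, hstop⟩ := ih ha
      exact ⟨i, hi.trans j.lt_succ_self, hstop⟩

lemma summable_wealthAt_of_alive (hV : Summable fun m => (g m).V) (ha : Alive g j S) :
    Summable fun m => (g m).wealthAt j S := by
  induction j with
  | zero => simpa using hV
  | succ j ih =>
    obtain ⟨ha, hmove⟩ := alive_succ_iff.1 ha
    simp_rw [wealthAt_succ]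
    rcases hmove with hsum | hflat
    · exact (ih ha).add (hsum.mul_right _)
    · simpa [hflat] using ih ha

end Alive

open scoped Classical in
def hedgePort (P : SimplePortfolio) (g : ℕ → SimplePortfolio) : SimplePortfolio where
  V := (∑' m, (g m).V) - P.V
  n := P.n
  H j S := if Alive g j S ∧ Summable (fun m => (g m).pos j S)
    then (∑' m, (g m).pos j S) - P.pos j S else 0
  nonanticipating j S S' h := by
    simp only [alive_congr h, (g _).pos_congr h, P.pos_congr h]

section hedgePort

variable {P : SimplePortfolio} {g : ℕ → SimplePortfolio} {j : ℕ} {S : ℕ → ℝ}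

lemma hedgePort_wealthAt_of_alive (hV : Summable fun m => (g m).V) (hj : j ≤ P.n)
    (ha : Alive g j S) :
    (hedgePort P g).wealthAt j S = ∑' m, (g m).wealthAt j S - P.wealthAt j S := by
  induction j with
  | zero => simp [hedgePort]
  | succ j ih =>
    obtain ⟨ha, hmove⟩ := alive_succ_iff.1 ha
    have hval := ih (by omega) ha
    simp_rw [wealthAt_succ]
    by_cases hflat : S (j + 1) = S j
    · simp [hflat, hval]
    have hsum := hmove.resolve_right hflat
    have hpos : (hedgePort P g).pos j S = (∑' m, (g m).pos j S) - P.pos j S :=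
      (if_pos (show j < P.n by omega)).trans (if_pos ⟨ha, hsum⟩)
    rw [hpos, hval, (summable_wealthAt_of_alive hV ha).tsum_add (hsum.mul_right _),
      tsum_mul_right]
    ring

lemma hedgePort_pos_of_not_alive_succ (h : ¬ Alive g (j + 1) S) : (hedgePort P g).pos j S = 0 := by
  unfold pos
  split_ifs with hj
  · exact if_neg fun hc => h (alive_succ_iff.2 ⟨hc.1, Or.inl hc.2⟩)
  · rfl

lemma NodewiseL.hedgePort_wealthAt_nonneg {𝒯 : Set (ℕ → ℝ)} (hL : NodewiseL 𝒯)
    (hg : ∀ m, ∀ T ∈ 𝒯, 0 ≤ (g m).wealth T) (hV : Summable fun m => (g m).V)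
    (hP : ∀ T ∈ 𝒯, ENNReal.ofReal (P.wealth T) ≤ ∑' m, ENNReal.ofReal ((g m).wealth T))
    (hS : S ∈ 𝒯) (hj : j ≤ P.n) : 0 ≤ (hedgePort P g).wealthAt j S := by
  have of_alive {j : ℕ} (hj : j ≤ P.n) (ha : Alive g j S) : 0 ≤ (hedgePort P g).wealthAt j S := by
    rw [hedgePort_wealthAt_of_alive hV hj ha, sub_nonneg]
    exact hL.wealthAt_le_tsum hg hP hS (summable_wealthAt_of_alive hV ha)
  induction j with
  | zero => exact of_alive hj alive_zero
  | succ j ih =>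
    by_cases ha : Alive g (j + 1) S
    · exact of_alive hj ha
    · rw [wealthAt_succ, hedgePort_pos_of_not_alive_succ ha, zero_mul, add_zero]
      exact ih (by omega)

end hedgePort

open scoped Classical in
def moveSign (𝒯 : Set (ℕ → ℝ)) (j : ℕ) (S : ℕ → ℝ) : ℝ :=
  if ∀ S' ∈ 𝒯, agreesUpTo S S' j → S j ≤ S' (j + 1) then 1 else -1

lemma moveSign_ne_zero (𝒯 : Set (ℕ → ℝ)) (j : ℕ) (S : ℕ → ℝ) : moveSign 𝒯 j S ≠ 0 := by
  unfold moveSign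
  split_ifs <;> norm_num

lemma moveSign_congr (𝒯 : Set (ℕ → ℝ)) {j : ℕ} {S S' : ℕ → ℝ} (h : ∀ k, k ≤ j → S k = S' k) :
    moveSign 𝒯 j S = moveSign 𝒯 j S' := by
  have hagree (X : ℕ → ℝ) : agreesUpTo S X j ↔ agreesUpTo S' X j :=
    forall₂_congr fun k hk => by rw [h k hk]
  classical
  exact if_congr (forall₂_congr fun X _ => by rw [hagree X, h j le_rfl]) rfl rfl

lemma abs_le_mul_max_inv {w b t₁ t₂ : ℝ} (ht₁ : t₁ < 0) (ht₂ : 0 < t₂)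
    (h₁ : 0 ≤ w + b * t₁) (h₂ : 0 ≤ w + b * t₂) : |b| ≤ w * max (-t₁)⁻¹ t₂⁻¹ := by
  have hw : 0 ≤ w := by nlinarith
  have hb₁ : b ≤ w * (-t₁)⁻¹ := by
    rw [← div_eq_mul_inv, le_div_iff₀ (neg_pos.2 ht₁)]
    linarith
  have hb₂ : -b ≤ w * t₂⁻¹ := by
    rw [← div_eq_mul_inv, le_div_iff₀ ht₂]
    linarith
  rw [abs_le]
  constructor
  · linarith [mul_le_mul_of_nonneg_left (le_max_right (-t₁)⁻¹ t₂⁻¹) hw]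
  · linarith [mul_le_mul_of_nonneg_left (le_max_left (-t₁)⁻¹ t₂⁻¹) hw]

namespace NodewiseL

variable {𝒯 : Set (ℕ → ℝ)} {g : ℕ → SimplePortfolio} {j : ℕ} {S : ℕ → ℝ}

/- With `w m` and `b m` the value and the position of `g m` at the node, a continuation moving by
`t` gives `0 ≤ w m + b m * t`; moves of both signs bound `|b m|` by a multiple of `w m`. -/
lemma summable_pos_of_down_of_up (hL : NodewiseL 𝒯) (hg : ∀ m, ∀ T ∈ 𝒯, 0 ≤ (g m).wealth T)
    (hsum : Summable fun m => (g m).wealthAt j S) {S₁ S₂ : ℕ → ℝ} (hS₁ : S₁ ∈ 𝒯) (hS₂ : S₂ ∈ 𝒯)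
    (h₁ : agreesUpTo S S₁ j) (h₂ : agreesUpTo S S₂ j) (hdown : S₁ (j + 1) < S j)
    (hup : S j < S₂ (j + 1)) : Summable fun m => (g m).pos j S := by
  have hcont {S'} (hS' : S' ∈ 𝒯) (hSS' : agreesUpTo S S' j) (m : ℕ) :
      0 ≤ (g m).wealthAt j S + (g m).pos j S * (S' (j + 1) - S j) := by
    have := hL.wealthAt_nonneg (hg m) hS' (j + 1)
    rwa [wealthAt_succ, (g m).wealthAt_congr hSS', (g m).pos_congr hSS', hSS' j le_rfl] at this
  refine Summable.of_norm_bounded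
    (hsum.mul_right (max (-(S₁ (j + 1) - S j))⁻¹ (S₂ (j + 1) - S j)⁻¹)) fun m => ?_
  rw [Real.norm_eq_abs]
  exact abs_le_mul_max_inv (sub_neg.2 hdown) (sub_pos.2 hup) (hcont hS₁ h₁ m) (hcont hS₂ h₂ m)

lemma moveSign_mul_nonneg (hL : NodewiseL 𝒯) (hg : ∀ m, ∀ T ∈ 𝒯, 0 ≤ (g m).wealth T)
    (hsum : Summable fun m => (g m).wealthAt j S) (hns : ¬ Summable fun m => (g m).pos j S)
    {S' : ℕ → ℝ} (hS' : S' ∈ 𝒯) (hSS' : agreesUpTo S S' j) :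
    0 ≤ moveSign 𝒯 j S * (S' (j + 1) - S j) := by
  unfold moveSign
  split_ifs with hup
  · linarith [hup S' hS' hSS']
  · push Not at hup
    obtain ⟨S₁, hS₁, h₁, hdown⟩ := hup
    have : S' (j + 1) ≤ S j :=
      not_lt.1 fun hup => hns (hL.summable_pos_of_down_of_up hg hsum hS₁ hS' h₁ hSS' hdown hup)
    linarith

end NodewiseL

open scoped Classical in
def jumpPort (𝒯 : Set (ℕ → ℝ)) (g : ℕ → SimplePortfolio) (n : ℕ) : SimplePortfolio where
  V := 0
  n := n
  H i T := if Alive g i T ∧ ¬ Summable (fun m => (g m).pos i T) then moveSign 𝒯 i T else 0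
  nonanticipating i T T' h := by
    simp only [alive_congr h, summable_pos_congr h, moveSign_congr 𝒯 h]

lemma jumpPort_wealth (𝒯 : Set (ℕ → ℝ)) (g : ℕ → SimplePortfolio) (n : ℕ) (T : ℕ → ℝ) :
    (jumpPort 𝒯 g n).wealth T
      = ∑ i ∈ Finset.range n, (jumpPort 𝒯 g n).pos i T * (T (i + 1) - T i) := by
  rw [← wealthAt_of_le _ le_rfl, wealthAt_eq_sum]
  exact zero_add _

section jumpPort

variable {𝒯 : Set (ℕ → ℝ)} {g : ℕ → SimplePortfolio} {n i : ℕ} {T : ℕ → ℝ}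

lemma jumpPort_pos_of_stop
    (h : i < n ∧ Alive g i T ∧ ¬ Summable fun m => (g m).pos i T) :
    (jumpPort 𝒯 g n).pos i T = moveSign 𝒯 i T :=
  (if_pos h.1).trans (if_pos h.2)

lemma jumpPort_pos_of_not_stop
    (h : ¬ (i < n ∧ Alive g i T ∧ ¬ Summable fun m => (g m).pos i T)) :
    (jumpPort 𝒯 g n).pos i T = 0 := by
  rw [pos]
  split_ifs with hi
  exacts [if_neg fun hstop => h ⟨hi, hstop⟩, rfl]

end jumpPort

namespace NodewiseL

variable {𝒯 : Set (ℕ → ℝ)} {g : ℕ → SimplePortfolio} {n : ℕ} {T : ℕ → ℝ}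

lemma jumpPort_pos_mul_nonneg (hL : NodewiseL 𝒯) (hg : ∀ m, ∀ T ∈ 𝒯, 0 ≤ (g m).wealth T)
    (hV : Summable fun m => (g m).V) (hT : T ∈ 𝒯) (i : ℕ) :
    0 ≤ (jumpPort 𝒯 g n).pos i T * (T (i + 1) - T i) := by
  by_cases hstop : i < n ∧ Alive g i T ∧ ¬ Summable fun m => (g m).pos i T
  · rw [jumpPort_pos_of_stop hstop]
    exact hL.moveSign_mul_nonneg hg (summable_wealthAt_of_alive hV hstop.2.1) hstop.2.2 hT
      fun _ _ => rfl
  · rw [jumpPort_pos_of_not_stop hstop, zero_mul]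

lemma jumpPort_wealth_nonneg (hL : NodewiseL 𝒯) (hg : ∀ m, ∀ T ∈ 𝒯, 0 ≤ (g m).wealth T)
    (hV : Summable fun m => (g m).V) (hT : T ∈ 𝒯) : 0 ≤ (jumpPort 𝒯 g n).wealth T := by
  rw [jumpPort_wealth]
  exact Finset.sum_nonneg fun i _ => hL.jumpPort_pos_mul_nonneg hg hV hT i

lemma jumpPort_wealth_pos (hL : NodewiseL 𝒯) (hg : ∀ m, ∀ T ∈ 𝒯, 0 ≤ (g m).wealth T)
    (hV : Summable fun m => (g m).V) (hT : T ∈ 𝒯) (ha : ¬ Alive g n T) :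
    0 < (jumpPort 𝒯 g n).wealth T := by
  obtain ⟨i, hi, halive, hns, hmove⟩ := exists_stop_of_not_alive ha
  rw [jumpPort_wealth]
  refine Finset.sum_pos' (fun i _ => hL.jumpPort_pos_mul_nonneg hg hV hT i)
    ⟨i, Finset.mem_range.2 hi, (hL.jumpPort_pos_mul_nonneg hg hV hT i).lt_of_ne' ?_⟩
  rw [jumpPort_pos_of_stop ⟨hi, halive, hns⟩]
  exact mul_ne_zero (moveSign_ne_zero 𝒯 i T) (sub_ne_zero.2 hmove)

lemma iBar_negPart_le (hL : NodewiseL 𝒯) (hne : 𝒯.Nonempty) {P : SimplePortfolio}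
    (hg : ∀ m, (g m).Positive 𝒯) (hV : Summable fun m => (g m).V)
    (hP : ∀ T ∈ 𝒯, ENNReal.ofReal (P.wealth T) ≤ ∑' m, ENNReal.ofReal ((g m).wealth T)) :
    IBar 𝒯 (fun S => ((max (-(P.wealth S)) 0 : ℝ) : EReal))
      ≤ (((∑' m, (g m).V) - P.V : ℝ) : EReal) := by
  have hgw m : ∀ T ∈ 𝒯, 0 ≤ (g m).wealth T := (hg m).2
  have hcost : 0 ≤ (∑' m, (g m).V) - P.V := by
    obtain ⟨S, hS⟩ := hne
    simpa [hedgePort] using hL.hedgePort_wealthAt_nonneg hgw hV hP hS (Nat.zero_le _)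
  have hsplit (f : SimplePortfolio → ℝ) :
      ∑' m, ENNReal.ofReal (f (portSeq (hedgePort P g) (fun _ => jumpPort 𝒯 g P.n) m))
        = ENNReal.ofReal (f (hedgePort P g)) + ∑' _ : ℕ, ENNReal.ofReal (f (jumpPort 𝒯 g P.n)) :=
    tsum_eq_zero_add' ENNReal.summable
  refine sInf_le ⟨portSeq (hedgePort P g) fun _ => jumpPort 𝒯 g P.n, ?_, fun S hS => ?_, ?_⟩
  · rintro (_ | m)
    · refine ⟨hcost, fun T hT => ?_⟩
      rw [← wealthAt_of_le _ le_rfl]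
      exact hL.hedgePort_wealthAt_nonneg hgw hV hP hT le_rfl
    · exact ⟨le_rfl, fun T hT => hL.jumpPort_wealth_nonneg hgw hV hT⟩
  · rw [EReal.coe_le_coe_ennreal_iff, hsplit fun Q => Q.wealth S]
    by_cases ha : Alive g P.n S
    · refine le_add_right (ENNReal.ofReal_le_ofReal ?_)
      have hsum := summable_wealthAt_of_alive hV ha
      have hhedge : (hedgePort P g).wealth S = ∑' m, (g m).wealthAt P.n S - P.wealth S := by
        rw [← (hedgePort P g).wealthAt_of_le (le_refl P.n), ← P.wealthAt_of_le le_rfl]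
        exact hedgePort_wealthAt_of_alive hV le_rfl ha
      have hdom := hL.wealthAt_le_tsum hgw hP hS hsum
      rw [P.wealthAt_of_le le_rfl] at hdom
      have : 0 ≤ ∑' m, (g m).wealthAt P.n S :=
        tsum_nonneg fun m => hL.wealthAt_nonneg (hgw m) hS P.n
      rw [hhedge, max_le_iff]
      constructor <;> linarith
    · rw [ENNReal.tsum_const_eq_top_of_ne_zero, add_top]
      · exact le_top
      · exact (ENNReal.ofReal_pos.2 (hL.jumpPort_wealth_pos hgw hV hS ha)).ne'
  · rw [hsplit SimplePortfolio.V]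
    simp [hedgePort, jumpPort, EReal.coe_ennreal_ofReal, max_eq_left hcost]

theorem koenigCond (hL : NodewiseL 𝒯) (hne : 𝒯.Nonempty) : KoenigCond 𝒯 := by
  intro P
  refine le_sInf ?_
  rintro _ ⟨g, hg, hhedge, rfl⟩
  rcases eq_or_ne (∑' m, ENNReal.ofReal (g m).V) ⊤ with hC | hC
  · rw [hC, EReal.coe_ennreal_top]
    exact le_top
  have hVnn m : 0 ≤ (g m).V := (hg m).1
  have hV : Summable fun m => (g m).V := by
    simpa [ENNReal.toReal_ofReal (hVnn _)] using ENNReal.summable_toReal hC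
  have hP (T) (hT : T ∈ 𝒯) :
      ENNReal.ofReal (P.wealth T) ≤ ∑' m, ENNReal.ofReal ((g m).wealth T) := by
    simpa using EReal.coe_le_coe_ennreal_iff.1 (hhedge T hT)
  calc (P.V : EReal) + IBar 𝒯 (fun S => ((max (-(P.wealth S)) 0 : ℝ) : EReal))
      ≤ P.V + (((∑' m, (g m).V) - P.V : ℝ) : EReal) :=
        add_le_add le_rfl (hL.iBar_negPart_le hne hg hV hP)
    _ = ((∑' m, (g m).V : ℝ) : EReal) := by
        rw [← EReal.coe_add, add_sub_cancel]
    _ = ((∑' m, ENNReal.ofReal (g m).V : ℝ≥0∞) : EReal) := by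
        rw [← ENNReal.ofReal_tsum_of_nonneg hVnn hV, EReal.coe_ennreal_ofReal,
          max_eq_left (tsum_nonneg hVnn)]

end NodewiseL

theorem stmt10_general (𝒮 : Set (ℕ → ℝ)) (hnL : NodewiseL 𝒮) :
    NodewiseK 𝒮 ∧ (𝒮.Nonempty → LOP 𝒮 ∧ KoenigCond 𝒮) := by
  have lop_koenig {𝒯 : Set (ℕ → ℝ)} (hL : NodewiseL 𝒯) (hne : 𝒯.Nonempty) :
      LOP 𝒯 ∧ KoenigCond 𝒯 :=
    ⟨(hL.iPos hne).lop, hL.koenigCond hne⟩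
  exact ⟨fun S hS j => lop_koenig (hnL.shiftedSpace S j) (shiftedSpace_nonempty hS j),
    lop_koenig hnL⟩

/-- Leinert's condition at every node implies König's condition
(together with (LOP)) at every node; in particular (LOP) and (K) hold for `𝒮`
itself. -/
theorem stmt10 (𝒮 : Set (ℕ → ℝ)) (s0 : ℝ) (h0 : ∀ S ∈ 𝒮, S 0 = s0)
    (hnL : NodewiseL 𝒮) :
    NodewiseK 𝒮 ∧ (𝒮.Nonempty → LOP 𝒮 ∧ KoenigCond 𝒮) :=
  stmt10_general 𝒮 hnL
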